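/- arXiv:2202.09069 — 3 statements merged into one kernel-verified Lean document; each statement's English description precedes it below -/
import Mathlib

section
/- Let M be a symmetric positive definite real m×m matrix with spectral condition number κ(M) = ‖M‖₂‖M⁻¹‖₂. Then for all vectors x, y ∈ ℝᵐ with ⟨x, y⟩ = 0 (Euclidean inner product), one has |⟨Mx, y⟩| ≤ (1 − 1/κ(M)) · ⟨Mx, x⟩^{1/2} · ⟨My, y⟩^{1/2}. -/
/-!
Since `x ⊥ y`, replacing `M` by `M - λ_min • 1` does not change `⟨Mx, y⟩`. The shifted matrix is
positive semidefinite, so Cauchy–Schwarz applies to its form, and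
`⟨(M - λ_min • 1)x, x⟩ ≤ (1 - λ_min / λ_max) ⟨Mx, x⟩` because `⟨Mx, x⟩ ≤ λ_max ‖x‖²`.
In an orthonormal eigenbasis of `M` all of this becomes a statement about weighted sums.
-/

open Matrix

namespace Matrix

variable {n : Type*} [Fintype n] [DecidableEq n]

theorem mulVec_dotProduct_mulVec_of_mem_unitaryGroup {U : Matrix n n ℝ}
    (hU : U ∈ unitaryGroup n ℝ) (x y : n → ℝ) : U *ᵥ x ⬝ᵥ U *ᵥ y = x ⬝ᵥ y := by
  have hUt : Uᵀ * U = 1 := by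
    rw [← conjTranspose_eq_transpose_of_trivial, ← star_eq_conjTranspose]
    exact mem_unitaryGroup_iff'.mp hU
  rw [← dotProduct_transpose_mulVec, mulVec_mulVec, hUt, one_mulVec, dotProduct_comm]

theorem IsHermitian.mulVec_dotProduct_eq {A : Matrix n n ℝ} (hA : A.IsHermitian) (x y : n → ℝ) :
    A *ᵥ x ⬝ᵥ y =
      diagonal hA.eigenvalues *ᵥ (star (hA.eigenvectorUnitary : Matrix n n ℝ) *ᵥ x) ⬝ᵥ
        star (hA.eigenvectorUnitary : Matrix n n ℝ) *ᵥ y := by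
  set U : Matrix n n ℝ := ↑hA.eigenvectorUnitary
  have hA' : A = U * diagonal hA.eigenvalues * star U := by simpa using hA.spectral_theorem
  conv_lhs => rw [hA']
  rw [← mulVec_mulVec, ← mulVec_mulVec, dotProduct_comm, ← dotProduct_transpose_mulVec,
    star_eq_conjTranspose, conjTranspose_eq_transpose_of_trivial]

end Matrix

section WeightedSums

variable {ι : Type*} [Fintype ι]

theorem sum_mul_mul_self_nonneg {w : ι → ℝ} (hw : ∀ i, 0 ≤ w i) (u : ι → ℝ) :
    0 ≤ ∑ i, w i * u i * u i :=
  Finset.sum_nonneg fun i _ => by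
    simpa only [mul_assoc] using mul_nonneg (hw i) (mul_self_nonneg (u i))

theorem sq_sum_mul_mul_le {w : ι → ℝ} (hw : ∀ i, 0 ≤ w i) (u v : ι → ℝ) :
    (∑ i, w i * u i * v i) ^ 2 ≤ (∑ i, w i * u i * u i) * ∑ i, w i * v i * v i :=
  Finset.sum_sq_le_sum_mul_sum_of_sq_le_mul _
    (fun i _ => by simpa only [mul_assoc] using mul_nonneg (hw i) (mul_self_nonneg (u i)))
    (fun i _ => by simpa only [mul_assoc] using mul_nonneg (hw i) (mul_self_nonneg (v i)))
    (fun i _ => le_of_eq (by ring))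

variable [DecidableEq ι]

theorem diagonal_mulVec_dotProduct (lam u v : ι → ℝ) :
    diagonal lam *ᵥ u ⬝ᵥ v = ∑ i, lam i * u i * v i := by
  simp only [dotProduct, mulVec_diagonal]

theorem abs_diagonal_mulVec_dotProduct_le {lam : ι → ℝ} {a b : ℝ} (ha : 0 ≤ a)
    (ha_le : ∀ i, a ≤ lam i) (hle_b : ∀ i, lam i ≤ b) {u v : ι → ℝ} (huv : u ⬝ᵥ v = 0) :
    |diagonal lam *ᵥ u ⬝ᵥ v| ≤
      (1 - a / b) * √(diagonal lam *ᵥ u ⬝ᵥ u) * √(diagonal lam *ᵥ v ⬝ᵥ v) := by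
  simp only [diagonal_mulVec_dotProduct]
  rcases isEmpty_or_nonempty ι with hι | ⟨⟨i₀⟩⟩
  · simp
  set c := 1 - a / b
  have hb : 0 ≤ b := ha.trans ((ha_le i₀).trans (hle_b i₀))
  have hc : 0 ≤ c := sub_nonneg.mpr (div_le_one_of_le₀ ((ha_le i₀).trans (hle_b i₀)) hb)
  have hshift_nonneg : ∀ i, 0 ≤ lam i - a := fun i => sub_nonneg.mpr (ha_le i)
  have hlam_nonneg : ∀ i, 0 ≤ lam i := fun i => ha.trans (ha_le i)
  have hshift : ∑ i, lam i * u i * v i = ∑ i, (lam i - a) * u i * v i := by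
    simp only [sub_mul, Finset.sum_sub_distrib, mul_assoc, ← Finset.mul_sum]
    rw [show ∑ i, u i * v i = u ⬝ᵥ v from rfl, huv, mul_zero, sub_zero]
  have hshrink : ∀ w : ι → ℝ, ∑ i, (lam i - a) * w i * w i ≤ c * ∑ i, lam i * w i * w i := by
    intro w
    rw [Finset.mul_sum]
    refine Finset.sum_le_sum fun i _ => ?_
    have hterm : lam i - a ≤ c * lam i := by
      have : a * (lam i / b) ≤ a := mul_le_of_le_one_right ha (div_le_one_of_le₀ (hle_b i) hb)
      calc lam i - a ≤ lam i - a * (lam i / b) := by linarith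
        _ = c * lam i := by ring
    simpa only [mul_assoc] using mul_le_mul_of_nonneg_right hterm (mul_self_nonneg (w i))
  have hsq : (∑ i, lam i * u i * v i) ^ 2 ≤
      (c * √(∑ i, lam i * u i * u i) * √(∑ i, lam i * v i * v i)) ^ 2 :=
    calc (∑ i, lam i * u i * v i) ^ 2
        ≤ (∑ i, (lam i - a) * u i * u i) * ∑ i, (lam i - a) * v i * v i := by
          rw [hshift]; exact sq_sum_mul_mul_le hshift_nonneg u v
      _ ≤ (c * ∑ i, lam i * u i * u i) * (c * ∑ i, lam i * v i * v i) :=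
          mul_le_mul (hshrink u) (hshrink v) (sum_mul_mul_self_nonneg hshift_nonneg v)
            (mul_nonneg hc (sum_mul_mul_self_nonneg hlam_nonneg u))
      _ = (c * √(∑ i, lam i * u i * u i) * √(∑ i, lam i * v i * v i)) ^ 2 := by
          rw [mul_pow, mul_pow, Real.sq_sqrt (sum_mul_mul_self_nonneg hlam_nonneg u),
            Real.sq_sqrt (sum_mul_mul_self_nonneg hlam_nonneg v)]
          ring
  exact abs_le_of_sq_le_sq hsq
    (mul_nonneg (mul_nonneg hc (Real.sqrt_nonneg _)) (Real.sqrt_nonneg _))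

end WeightedSums

theorem stmt_0_general {m : ℕ} (M : Matrix (Fin m) (Fin m) ℝ)
    (hpd : M.PosDef) (x y : Fin m → ℝ) (hxy : x ⬝ᵥ y = 0) :
    |M.mulVec x ⬝ᵥ y| ≤
      (1 - (⨅ i, hpd.isHermitian.eigenvalues i) / (⨆ i, hpd.isHermitian.eigenvalues i)) *
        Real.sqrt (M.mulVec x ⬝ᵥ x) * Real.sqrt (M.mulVec y ⬝ᵥ y) := by
  have hH := hpd.isHermitian
  have hU := Unitary.star_mem hH.eigenvectorUnitary.2
  rw [hH.mulVec_dotProduct_eq, hH.mulVec_dotProduct_eq, hH.mulVec_dotProduct_eq]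
  refine abs_diagonal_mulVec_dotProduct_le (Real.iInf_nonneg fun i => (hpd.eigenvalues_pos i).le)
    (fun i => ciInf_le (Finite.bddBelow_range _) i)
    (fun i => le_ciSup (Finite.bddAbove_range _) i) ?_
  rwa [mulVec_dotProduct_mulVec_of_mem_unitaryGroup hU]

/-- Strengthened Cauchy–Schwarz inequality for a symmetric positive definite
matrix `M`: for Euclidean-orthogonal vectors `x, y`,
`|⟨Mx, y⟩| ≤ (1 - 1/κ(M)) √⟨Mx,x⟩ √⟨My,y⟩`, where `κ(M) = λ_max(M)/λ_min(M)`. -/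
theorem stmt_0 {m : ℕ} (hm : 0 < m) (M : Matrix (Fin m) (Fin m) ℝ)
    (hpd : M.PosDef) (x y : Fin m → ℝ) (hxy : x ⬝ᵥ y = 0) :
    |M.mulVec x ⬝ᵥ y| ≤
      (1 - (⨅ i, hpd.isHermitian.eigenvalues i) / (⨆ i, hpd.isHermitian.eigenvalues i)) *
        Real.sqrt (M.mulVec x ⬝ᵥ x) * Real.sqrt (M.mulVec y ⬝ᵥ y) :=
  stmt_0_general M hpd x y hxy
end

section
/- Let T be a self-adjoint positive definite linear operator on a finite-dimensional real inner product space V, with λ_min and λ_max its smallest and largest eigenvalues. Then for all x, y ∈ V with ⟨x, y⟩ = 0, one has |⟨Tx, y⟩| ≤ (1 − λ_min/λ_max) · ⟨Tx, x⟩^{1/2} · ⟨Ty, y⟩^{1/2}. -/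
open scoped RealInnerProductSpace

/-- Cauchy–Schwarz for the positive semidefinite symmetric form `⟪S·,·⟫`. -/
lemma aux_cs {V : Type*} [NormedAddCommGroup V] [InnerProductSpace ℝ V]
    (S : V →ₗ[ℝ] V) (hS : S.IsSymmetric) (hpos : ∀ z : V, 0 ≤ ⟪S z, z⟫)
    (x y : V) : |⟪S x, y⟫| ≤ Real.sqrt ⟪S x, x⟫ * Real.sqrt ⟪S y, y⟫ := by
  have key : ⟪S x, y⟫ ^ 2 ≤ ⟪S x, x⟫ * ⟪S y, y⟫ := by
    have hdisc := discrim_le_zero (a := ⟪S y, y⟫) (b := 2 * ⟪S x, y⟫) (c := ⟪S x, x⟫) ?_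
    · rw [discrim] at hdisc; nlinarith [hdisc]
    · intro t
      have h0 := hpos (x + t • y)
      have e1 : ⟪S (x + t • y), x + t • y⟫
          = ⟪S x, x⟫ + t * ⟪S x, y⟫ + t * ⟪S y, x⟫ + t * t * ⟪S y, y⟫ := by
        simp [map_add, map_smul, inner_add_left, inner_add_right,
          real_inner_smul_left, real_inner_smul_right]
        ring
      have e2 : ⟪S y, x⟫ = ⟪S x, y⟫ := by
        rw [hS y x, real_inner_comm]
      rw [e1, e2] at h0
      nlinarith [h0]
  have h1 : |⟪S x, y⟫| = Real.sqrt (⟪S x, y⟫ ^ 2) := by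
    rw [Real.sqrt_sq_eq_abs]
  rw [h1, ← Real.sqrt_mul (hpos x)]
  exact Real.sqrt_le_sqrt key

/-- Strengthened Cauchy–Schwarz inequality for a self-adjoint positive definite
operator `T` on a finite-dimensional real inner product space: for orthogonal
`x, y`, `|⟨Tx,y⟩| ≤ (1 - λ_min/λ_max) ⟨Tx,x⟩^{1/2} ⟨Ty,y⟩^{1/2}`. -/
theorem stmt_1 {V : Type*} [NormedAddCommGroup V] [InnerProductSpace ℝ V]
    [FiniteDimensional ℝ V] {n : ℕ} (hn : 0 < n)
    (hdim : Module.finrank ℝ V = n)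
    (T : V →ₗ[ℝ] V) (hT : T.IsSymmetric)
    (hpdef : ∀ x : V, x ≠ 0 → 0 < ⟪T x, x⟫)
    (x y : V) (hxy : ⟪x, y⟫ = 0) :
    |⟪T x, y⟫| ≤
      (1 - (⨅ i, hT.eigenvalues hdim i) / (⨆ i, hT.eigenvalues hdim i)) *
        Real.sqrt ⟪T x, x⟫ * Real.sqrt ⟪T y, y⟫ := by
  haveI : Nonempty (Fin n) := Fin.pos_iff_nonempty.mp hn
  set lam := hT.eigenvalues hdim with hlam
  set m := ⨅ i, lam i with hm
  set M := ⨆ i, lam i with hM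
  -- each eigenvalue is positive
  have hlampos : ∀ i, 0 < lam i := by
    intro i
    have hei := hT.hasEigenvector_eigenvectorBasis hdim i
    set v := hT.eigenvectorBasis hdim i with hv
    have hv0 : v ≠ 0 := hei.2
    have hTv : T v = (lam i) • v := hT.apply_eigenvectorBasis hdim i
    have h1 : 0 < ⟪T v, v⟫ := hpdef v hv0
    rw [hTv, real_inner_smul_left] at h1
    have h2 : 0 < ⟪v, v⟫ := by
      rw [real_inner_self_eq_norm_sq]
      exact pow_pos (norm_pos_iff.mpr hv0) 2
    nlinarith
  have hbddB : BddBelow (Set.range lam) := Set.Finite.bddBelow (Set.finite_range _)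
  have hbddA : BddAbove (Set.range lam) := Set.Finite.bddAbove (Set.finite_range _)
  have hmle : ∀ i, m ≤ lam i := fun i => ciInf_le hbddB i
  have hleM : ∀ i, lam i ≤ M := fun i => le_ciSup hbddA i
  have hmpos : 0 < m := by
    obtain ⟨i0, hi0⟩ := Finite.exists_min lam
    exact lt_of_lt_of_le (hlampos i0) (le_ciInf hi0)
  have hMpos : 0 < M := lt_of_lt_of_le hmpos (le_trans (hmle (Classical.arbitrary _))
    (hleM (Classical.arbitrary _)))
  -- key quadratic form bounds : m⟪z,z⟫ ≤ ⟪Tz,z⟫ ≤ M⟪z,z⟫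
  have hquad : ∀ z : V, m * ⟪z, z⟫ ≤ ⟪T z, z⟫ ∧ ⟪T z, z⟫ ≤ M * ⟪z, z⟫ := by
    intro z
    set B := hT.eigenvectorBasis hdim with hB
    have hTz : ⟪T z, z⟫ = ∑ i, lam i * (B.repr z i) ^ 2 := by
      rw [← B.repr.inner_map_map (T z) z]
      rw [PiLp.inner_apply]
      refine Finset.sum_congr rfl fun i _ => ?_
      rw [hT.eigenvectorBasis_apply_self_apply hdim z i]
      simp [RCLike.inner_apply]
      ring
    have hzz : ⟪z, z⟫ = ∑ i, (B.repr z i) ^ 2 := by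
      rw [← B.repr.inner_map_map z z, PiLp.inner_apply]
      refine Finset.sum_congr rfl fun i _ => ?_
      simp [RCLike.inner_apply]
    constructor
    · rw [hTz, hzz, Finset.mul_sum]
      refine Finset.sum_le_sum fun i _ => ?_
      exact mul_le_mul_of_nonneg_right (hmle i) (sq_nonneg _)
    · rw [hTz, hzz, Finset.mul_sum]
      refine Finset.sum_le_sum fun i _ => ?_
      exact mul_le_mul_of_nonneg_right (hleM i) (sq_nonneg _)
  -- the shifted operator S = T - m • id
  set S : V →ₗ[ℝ] V := T - m • LinearMap.id with hSdef
  have hSapp : ∀ z : V, S z = T z - m • z := fun z => rfl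
  have hSsymm : S.IsSymmetric := by
    intro u v
    simp only [hSapp, inner_sub_left, inner_sub_right, real_inner_smul_left,
      real_inner_smul_right, hT u v, real_inner_comm u v]
  have hSinner : ∀ u v : V, ⟪S u, v⟫ = ⟪T u, v⟫ - m * ⟪u, v⟫ := by
    intro u v; rw [hSapp, inner_sub_left, real_inner_smul_left]
  have hSpos : ∀ z : V, 0 ≤ ⟪S z, z⟫ := by
    intro z; rw [hSinner]
    linarith [(hquad z).1]
  -- bound on the diagonal of S
  have hSdiag : ∀ z : V, ⟪S z, z⟫ ≤ (1 - m / M) * ⟪T z, z⟫ := by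
    intro z
    rw [hSinner]
    have h1 : ⟪T z, z⟫ ≤ M * ⟪z, z⟫ := (hquad z).2
    have h2 : (m / M) * ⟪T z, z⟫ ≤ m * ⟪z, z⟫ := by
      rw [div_mul_eq_mul_div, div_le_iff₀ hMpos]
      nlinarith [hmpos.le]
    linarith
  have hTxy : ⟪T x, y⟫ = ⟪S x, y⟫ := by rw [hSinner, hxy]; ring
  have hcs := aux_cs S hSsymm hSpos x y
  rw [hTxy]
  refine le_trans hcs ?_
  have hcoef : 0 ≤ 1 - m / M := by
    have : m / M ≤ 1 := div_le_one_of_le₀ (le_trans (hmle (Classical.arbitrary _))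
      (hleM (Classical.arbitrary _))) hMpos.le
    linarith
  have hx' : Real.sqrt ⟪S x, x⟫ ≤ Real.sqrt ((1 - m / M) * ⟪T x, x⟫) :=
    Real.sqrt_le_sqrt (hSdiag x)
  have hy' : Real.sqrt ⟪S y, y⟫ ≤ Real.sqrt ((1 - m / M) * ⟪T y, y⟫) :=
    Real.sqrt_le_sqrt (hSdiag y)
  have hTxx : 0 ≤ ⟪T x, x⟫ := by
    rcases eq_or_ne x 0 with rfl | h
    · simp
    · exact (hpdef x h).le
  have hTyy : 0 ≤ ⟪T y, y⟫ := by
    rcases eq_or_ne y 0 with rfl | h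
    · simp
    · exact (hpdef y h).le
  calc Real.sqrt ⟪S x, x⟫ * Real.sqrt ⟪S y, y⟫
      ≤ Real.sqrt ((1 - m / M) * ⟪T x, x⟫) * Real.sqrt ((1 - m / M) * ⟪T y, y⟫) :=
        mul_le_mul hx' hy' (Real.sqrt_nonneg _) (Real.sqrt_nonneg _)
    _ = (1 - m / M) * Real.sqrt ⟪T x, x⟫ * Real.sqrt ⟪T y, y⟫ := by
        rw [Real.sqrt_mul hcoef, Real.sqrt_mul hcoef, mul_mul_mul_comm,
          Real.mul_self_sqrt hcoef]
        ring
end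

section
/- Let 0 < λ₁ ≤ λ₂ ≤ … ≤ λ_m be positive reals and x, y ∈ ℝᵐ with ∑ᵢ xᵢ yᵢ = 0. Then |∑ᵢ λᵢ xᵢ yᵢ| ≤ (1 − λ₁/λ_m) · (∑ᵢ λᵢ xᵢ²)^{1/2} · (∑ᵢ λᵢ yᵢ²)^{1/2}. -/
/-! Orthogonality lets one replace the weights `λᵢ` by `λᵢ - λ₁`, which lie between `0` and
`(1 - λ₁/λ_m) λᵢ`; Cauchy–Schwarz for the weighted sums then gives the bound. -/

open Finset

lemma sub_le_one_sub_div_mul {a b t : ℝ} (ha : 0 ≤ a) (hat : a ≤ t) (htb : t ≤ b) :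
    t - a ≤ (1 - a / b) * t := by
  have : a / b * t ≤ a := by
    rw [div_mul_eq_mul_div]
    exact div_le_of_le_mul₀ (ha.trans (hat.trans htb)) ha (mul_le_mul_of_nonneg_left htb ha)
  linarith

theorem abs_sum_mul_mul_le_of_sum_mul_eq_zero {ι : Type*} (s : Finset ι) {w x y : ι → ℝ}
    {a b : ℝ} (ha : 0 ≤ a) (hab : a ≤ b) (hw : ∀ i ∈ s, w i ∈ Set.Icc a b)
    (hxy : ∑ i ∈ s, x i * y i = 0) :
    |∑ i ∈ s, w i * x i * y i| ≤
      (1 - a / b) * √(∑ i ∈ s, w i * x i ^ 2) * √(∑ i ∈ s, w i * y i ^ 2) := by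
  set c := 1 - a / b
  have hc : 0 ≤ c := sub_nonneg.2 (div_le_one_of_le₀ hab (ha.trans hab))
  have hw0 : ∀ i ∈ s, 0 ≤ w i := fun i hi => ha.trans (hw i hi).1
  have hshift : ∑ i ∈ s, w i * x i * y i = ∑ i ∈ s, (w i - a) * x i * y i := by
    simp only [sub_mul, mul_assoc, sum_sub_distrib, ← mul_sum, hxy, mul_zero, sub_zero]
  have hcs : (∑ i ∈ s, (w i - a) * x i * y i) ^ 2 ≤
      (∑ i ∈ s, c * (w i * x i ^ 2)) * ∑ i ∈ s, c * (w i * y i ^ 2) := by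
    refine sum_sq_le_sum_mul_sum_of_sq_le_mul s (fun i hi => by have := hw0 i hi; positivity)
      (fun i hi => by have := hw0 i hi; positivity) fun i hi => ?_
    have hwa : w i - a ≤ c * w i := sub_le_one_sub_div_mul ha (hw i hi).1 (hw i hi).2
    calc ((w i - a) * x i * y i) ^ 2 = (w i - a) ^ 2 * (x i * y i) ^ 2 := by ring
      _ ≤ (c * w i) ^ 2 * (x i * y i) ^ 2 := by
          gcongr
          linarith [(hw i hi).1]
      _ = c * (w i * x i ^ 2) * (c * (w i * y i ^ 2)) := by ring
  rw [← mul_sum, ← mul_sum, mul_mul_mul_comm] at hcs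
  calc |∑ i ∈ s, w i * x i * y i| = √((∑ i ∈ s, (w i - a) * x i * y i) ^ 2) := by
        rw [hshift, Real.sqrt_sq_eq_abs]
    _ ≤ √(c * c * ((∑ i ∈ s, w i * x i ^ 2) * ∑ i ∈ s, w i * y i ^ 2)) := Real.sqrt_le_sqrt hcs
    _ = c * √(∑ i ∈ s, w i * x i ^ 2) * √(∑ i ∈ s, w i * y i ^ 2) := by
        rw [Real.sqrt_mul (mul_self_nonneg c), Real.sqrt_mul_self hc,
          Real.sqrt_mul (sum_nonneg fun i hi => mul_nonneg (hw0 i hi) (sq_nonneg _)), mul_assoc]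

/-- For positive reals `0 < λ₁ ≤ ⋯ ≤ λ_m` and Euclidean-orthogonal vectors
`x, y ∈ ℝᵐ`: `|∑ λᵢ xᵢ yᵢ| ≤ (1 - λ₁/λ_m) (∑ λᵢ xᵢ²)^{1/2} (∑ λᵢ yᵢ²)^{1/2}`. -/
theorem stmt_2 {m : ℕ} (lam : Fin (m + 1) → ℝ)
    (hpos : ∀ i, 0 < lam i) (hmono : Monotone lam)
    (x y : Fin (m + 1) → ℝ) (hxy : ∑ i, x i * y i = 0) :
    |∑ i, lam i * x i * y i| ≤
      (1 - lam 0 / lam (Fin.last m)) *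
        Real.sqrt (∑ i, lam i * (x i) ^ 2) * Real.sqrt (∑ i, lam i * (y i) ^ 2) :=
  abs_sum_mul_mul_le_of_sum_mul_eq_zero univ (hpos 0).le (hmono (Fin.zero_le _))
    (fun i _ => ⟨hmono (Fin.zero_le i), hmono (Fin.le_last i)⟩) hxy
end
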